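/- Consider matrices A ∈ ℝ^{d×d}, B ∈ ℝ^{d×p}, K ∈ ℝ^{p×d}, C ∈ ℝ^{q×d}, D ∈ ℝ^{q×p}, vectors b ∈ ℝᵈ, c̄ ∈ ℝ^q, and a nonempty compact set W ⊆ ℝᵈ. Set A_K := A − BK, C_K := C − DK, and define for each k ≥ 0 the tightening vector d_k ∈ ℝ^q componentwise by (d_k)ᵢ = max over w₀,…,w_{k−1} ∈ W of (C_K)ᵢ Σ_{j=0}^{k−1} A_Kʲ w_j. Suppose a nominal trajectory x_{k+1} = A x_k + B u_k + b satisfies the tightened constraints C x_k + D u_k + c̄ + d_k ≤ 0 for k = 0,…,N−1. Then for every disturbance sequence w_k ∈ W, the perturbed trajectory defined by s₀ = x₀, a_k = u_k − K(s_k − x_k), s_{k+1} = A s_k + B a_k + b + w_k satisfies the original safety constraints C s_k + D a_k + c̄ ≤ 0 componentwise for all k = 0,…,N−1. -/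

import Mathlib

open Matrix

/-!
The deviation `e_k = s_k - x_k` of the perturbed from the nominal trajectory obeys
`e_{k+1} = A_K e_k + w_k` with `e_0 = 0`, so `e_k = ∑_{j<k} A_Kʲ w_{k-1-j}` is one of the sums
over which `d_k` is the maximum. Since `C s_k + D a_k = C x_k + D u_k + C_K e_k`, the tightened
nominal constraint absorbs the worst case `(C_K e_k)ᵢ ≤ (d_k)ᵢ`.
-/

namespace Matrix

variable {n m R : Type*} [Fintype n] [Fintype m]

theorem eq_sum_pow_mulVec_rev_of_succ [DecidableEq n] [Semiring R] {N : ℕ} (M : Matrix n n R)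
    (e w : ℕ → n → R) (h0 : e 0 = 0) (hsucc : ∀ k < N, e (k + 1) = M *ᵥ e k + w k) :
    ∀ k ≤ N, e k = ∑ j : Fin k, (M ^ (j : ℕ)) *ᵥ w j.rev := by
  intro k hk
  induction k with
  | zero => simp [h0]
  | succ k ih =>
    rw [hsucc k hk, ih (by omega), Fin.sum_univ_succ, mulVec_sum, add_comm]
    simp [Fin.rev_succ, mulVec_mulVec, pow_succ']

variable [Ring R]

theorem sub_succ_eq_mulVec_sub_add (A : Matrix n n R) (B : Matrix n m R) (K : Matrix m n R)
    {x x' s s' b w : n → R} {u a : m → R} (hx : x' = A *ᵥ x + B *ᵥ u + b)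
    (ha : a = u - K *ᵥ (s - x)) (hs : s' = A *ᵥ s + B *ᵥ a + b + w) :
    s' - x' = (A - B * K) *ᵥ (s - x) + w := by
  subst hx ha hs
  simp only [mulVec_sub, sub_mulVec, mulVec_mulVec]
  abel

theorem mulVec_add_mulVec_eq_add_mulVec_sub {l : Type*} (C : Matrix l n R) (D : Matrix l m R)
    (K : Matrix m n R) {x s : n → R} {u a : m → R} (ha : a = u - K *ᵥ (s - x)) :
    C *ᵥ s + D *ᵥ a = C *ᵥ x + D *ᵥ u + (C - D * K) *ᵥ (s - x) := by
  subst ha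
  simp only [mulVec_sub, sub_mulVec, mulVec_mulVec]
  abel

end Matrix

theorem stmt_9_general (dn pn qn : ℕ)
    (A : Matrix (Fin dn) (Fin dn) ℝ) (B : Matrix (Fin dn) (Fin pn) ℝ)
    (K : Matrix (Fin pn) (Fin dn) ℝ)
    (C : Matrix (Fin qn) (Fin dn) ℝ) (D : Matrix (Fin qn) (Fin pn) ℝ)
    (b : Fin dn → ℝ) (cbar : Fin qn → ℝ)
    (W : Set (Fin dn → ℝ))
    (AK : Matrix (Fin dn) (Fin dn) ℝ) (hAK : AK = A - B * K)
    (CK : Matrix (Fin qn) (Fin dn) ℝ) (hCK : CK = C - D * K)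
    (dvec : ℕ → Fin qn → ℝ)
    (hd : ∀ k i, IsGreatest
      {y : ℝ | ∃ ws : Fin k → (Fin dn → ℝ), (∀ j, ws j ∈ W) ∧
          y = CK.mulVec (∑ j : Fin k, (AK ^ (j : ℕ)).mulVec (ws j)) i}
      (dvec k i))
    (N : ℕ) (x : ℕ → (Fin dn → ℝ)) (u : ℕ → (Fin pn → ℝ))
    (hx : ∀ k < N, x (k + 1) = A.mulVec (x k) + B.mulVec (u k) + b)
    (htight : ∀ k < N, ∀ i,
      (C.mulVec (x k) + D.mulVec (u k) + cbar + dvec k) i ≤ 0) :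
    ∀ (w : ℕ → (Fin dn → ℝ)), (∀ k, w k ∈ W) →
    ∀ (s : ℕ → (Fin dn → ℝ)) (a : ℕ → (Fin pn → ℝ)),
      s 0 = x 0 →
      (∀ k, a k = u k - K.mulVec (s k - x k)) →
      (∀ k, s (k + 1) = A.mulVec (s k) + B.mulVec (a k) + b + w k) →
      ∀ k < N, ∀ i, (C.mulVec (s k) + D.mulVec (a k) + cbar) i ≤ 0 := by
  intro w hw s a hs0 ha hs k hk i
  have herr : s k - x k = ∑ j : Fin k, (AK ^ (j : ℕ)) *ᵥ w j.rev :=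
    eq_sum_pow_mulVec_rev_of_succ AK (fun k ↦ s k - x k) w (sub_eq_zero.2 hs0)
      (fun k hk ↦ hAK ▸ sub_succ_eq_mulVec_sub_add A B K (hx k hk) (ha k) (hs k)) k hk.le
  have hworst : (CK *ᵥ (s k - x k)) i ≤ dvec k i :=
    (hd k i).2 ⟨fun j ↦ w j.rev, fun j ↦ hw _, by rw [herr]⟩
  have hout := congrFun (mulVec_add_mulVec_eq_add_mulVec_sub C D K (ha k)) i
  have hnom := htight k hk i
  rw [← hCK] at hout
  simp only [Pi.add_apply] at hout hnom ⊢
  linarith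

/-- Finite-horizon robust constraint satisfaction underlying Proposition 1:
if the nominal trajectory satisfies the tightened constraints
`C x_k + D u_k + c̄ + d_k ≤ 0` with tightening vectors
`(d_k)ᵢ = max over w₀,…,w_{k-1} ∈ W of (C_K)ᵢ ∑_{j<k} A_Kʲ w_j`,
then every perturbed trajectory under the tube policy
`a_k = u_k - K (s_k - x_k)` and disturbances `w_k ∈ W` satisfies the original
safety constraints `C s_k + D a_k + c̄ ≤ 0` for `k = 0,…,N-1`. -/
theorem stmt_9 (dn pn qn : ℕ)
    (A : Matrix (Fin dn) (Fin dn) ℝ) (B : Matrix (Fin dn) (Fin pn) ℝ)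
    (K : Matrix (Fin pn) (Fin dn) ℝ)
    (C : Matrix (Fin qn) (Fin dn) ℝ) (D : Matrix (Fin qn) (Fin pn) ℝ)
    (b : Fin dn → ℝ) (cbar : Fin qn → ℝ)
    (W : Set (Fin dn → ℝ)) (hWne : W.Nonempty) (hWc : IsCompact W)
    (AK : Matrix (Fin dn) (Fin dn) ℝ) (hAK : AK = A - B * K)
    (CK : Matrix (Fin qn) (Fin dn) ℝ) (hCK : CK = C - D * K)
    (dvec : ℕ → Fin qn → ℝ)
    (hd : ∀ k i, IsGreatest
      {y : ℝ | ∃ ws : Fin k → (Fin dn → ℝ), (∀ j, ws j ∈ W) ∧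
          y = CK.mulVec (∑ j : Fin k, (AK ^ (j : ℕ)).mulVec (ws j)) i}
      (dvec k i))
    (N : ℕ) (x : ℕ → (Fin dn → ℝ)) (u : ℕ → (Fin pn → ℝ))
    (hx : ∀ k < N, x (k + 1) = A.mulVec (x k) + B.mulVec (u k) + b)
    (htight : ∀ k < N, ∀ i,
      (C.mulVec (x k) + D.mulVec (u k) + cbar + dvec k) i ≤ 0) :
    ∀ (w : ℕ → (Fin dn → ℝ)), (∀ k, w k ∈ W) →
    ∀ (s : ℕ → (Fin dn → ℝ)) (a : ℕ → (Fin pn → ℝ)),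
      s 0 = x 0 →
      (∀ k, a k = u k - K.mulVec (s k - x k)) →
      (∀ k, s (k + 1) = A.mulVec (s k) + B.mulVec (a k) + b + w k) →
      ∀ k < N, ∀ i, (C.mulVec (s k) + D.mulVec (a k) + cbar) i ≤ 0 :=
  stmt_9_general dn pn qn A B K C D b cbar W AK hAK CK hCK dvec hd N x u hx htight
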